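/- Fix α > 0. As Δ → 0⁺, the ratio of the SPDE-approximated spectral density to the true aliased Matérn spectral density at the highest frequency in dimension 1 with ν = 3/2 converges to 3: lim_{Δ→0⁺} M̃_Δ(1/(2Δ); 3/2, 1) / M_Δ(1/(2Δ); 3/2, 1) = 3. -/

import Mathlib

/-!
Multiplied by `Δ⁴`, both spectral densities at the Nyquist frequency `1/(2Δ)` become functions of
`s = α²Δ²`: the SPDE one is `4α³ / (s + 4)²` and the aliased Matérn one is
`4α³ ∑_{k ∈ ℤ} 1 / (s + π²(2k+1)²)²`. The series is continuous in `s ≥ 0`, being dominated by its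
terms at `s = 0`, and `∑_{k ∈ ℤ} (2k+1)⁻⁴ = π⁴/48` follows from `ζ(4) = π⁴/90` by removing the
even terms. Hence the ratio tends to `(1/16) / (1/48) = 3`.
-/

open Real Filter Topology

lemma hasSum_one_div_odd_pow_four :
    HasSum (fun n : ℕ => 1 / (2 * n + 1 : ℝ) ^ 4) (π ^ 4 / 96) := by
  let f : ℕ → ℝ := fun n => 1 / (n : ℝ) ^ 4
  have heven : HasSum (fun n => f (2 * n)) (π ^ 4 / 1440) := by
    have h := hasSum_zeta_four.mul_left (1 / 16)
    rw [show 1 / 16 * (π ^ 4 / 90) = π ^ 4 / 1440 by ring] at h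
    have e : (fun n => f (2 * n)) = fun n : ℕ => 1 / 16 * (1 / (n : ℝ) ^ 4) := by
      ext n
      simp only [f]
      push_cast
      ring
    rwa [e]
  have hodd : Summable fun n => f (2 * n + 1) :=
    hasSum_zeta_four.summable.comp_injective (i := fun n => 2 * n + 1) fun a b hab => by
      simp only at hab; omega
  have hodd_eq : ∑' n, f (2 * n + 1) = π ^ 4 / 96 := by
    linarith [hasSum_zeta_four.unique (heven.even_add_odd hodd.hasSum)]
  have h := hodd.hasSum
  rw [hodd_eq] at h
  simpa [f] using h

lemma hasSum_int_one_div_odd_pow_four :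
    HasSum (fun k : ℤ => 1 / (2 * k + 1 : ℝ) ^ 4) (π ^ 4 / 48) := by
  have h := hasSum_one_div_odd_pow_four
  have e : (fun n : ℕ => 1 / (2 * ((-(n + 1 : ℕ) : ℤ) : ℝ) + 1) ^ 4) =
      fun n : ℕ => 1 / (2 * n + 1 : ℝ) ^ 4 := by
    ext n
    push_cast
    ring
  convert HasSum.of_nat_of_neg_add_one (f := fun k : ℤ => 1 / (2 * k + 1 : ℝ) ^ 4)
    (by simpa using h) (e ▸ h) using 1
  ring

lemma two_mul_intCast_add_one_ne_zero (k : ℤ) : (2 * k + 1 : ℝ) ≠ 0 := by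
  exact_mod_cast (by omega : 2 * k + 1 ≠ 0)

lemma hasSum_int_one_div_pi_sq_mul_odd_sq_sq :
    HasSum (fun k : ℤ => 1 / (π ^ 2 * (2 * k + 1) ^ 2) ^ 2) (1 / 48) := by
  have e : (fun k : ℤ => 1 / (π ^ 2 * (2 * k + 1) ^ 2) ^ 2) =
      fun k : ℤ => 1 / (2 * k + 1 : ℝ) ^ 4 / π ^ 4 := by
    ext k
    have := two_mul_intCast_add_one_ne_zero k
    field_simp
  rw [e, show (1 / 48 : ℝ) = π ^ 4 / 48 / π ^ 4 by field_simp]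
  exact hasSum_int_one_div_odd_pow_four.div_const _

lemma continuousOn_tsum_one_div_add_sq {ι : Type*} {b : ι → ℝ} (hb : ∀ i, 0 < b i)
    (hsum : Summable fun i => 1 / b i ^ 2) :
    ContinuousOn (fun s => ∑' i, 1 / (s + b i) ^ 2) (Set.Ici 0) := by
  refine continuousOn_tsum (fun i => ?_) hsum fun i s (hs : 0 ≤ s) => ?_
  · exact continuousOn_const.div (by fun_prop) fun s (hs : 0 ≤ s) => by
      have := hb i; positivity
  · have := hb i
    rw [norm_of_nonneg (by positivity)]
    gcongr
    linarith

lemma spde_nyquist_eq {α Δ : ℝ} (hα : α ≠ 0) (hΔ : Δ ≠ 0) :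
    α * Δ ^ 2 / (α * Δ / 2 + 2 / (α * Δ)) ^ 2 =
      4 * α ^ 3 * Δ ^ 4 * (1 / (α ^ 2 * Δ ^ 2 + 4) ^ 2) := by
  have : α ^ 2 * Δ ^ 2 + 4 ≠ 0 := by positivity
  field_simp
  ring

lemma aliased_matern_nyquist_term_eq {α Δ : ℝ} (hΔ : Δ ≠ 0) (k : ℤ) :
    4 * α ^ 3 / (α ^ 2 + 4 * π ^ 2 * (1 / (2 * Δ) + (k : ℝ) / Δ) ^ 2) ^ 2 =
      4 * α ^ 3 * Δ ^ 4 * (1 / (α ^ 2 * Δ ^ 2 + π ^ 2 * (2 * k + 1) ^ 2) ^ 2) := by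
  have hk := two_mul_intCast_add_one_ne_zero k
  have : α ^ 2 * Δ ^ 2 + π ^ 2 * (2 * k + 1) ^ 2 ≠ 0 := by positivity
  rw [show 4 * π ^ 2 * (1 / (2 * Δ) + (k : ℝ) / Δ) ^ 2 = π ^ 2 * (2 * k + 1) ^ 2 / Δ ^ 2 by
    field_simp; ring]
  field_simp

theorem spde_over_matern_nyquist_ratio_d1 (α : ℝ) (hα : 0 < α) :
    Tendsto
      (fun Δ : ℝ =>
        (α * Δ ^ 2 / (α * Δ / 2 + 2 / (α * Δ)) ^ 2) /
          ∑' k : ℤ,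
            4 * α ^ 3 / (α ^ 2 + 4 * π ^ 2 * (1 / (2 * Δ) + (k : ℝ) / Δ) ^ 2) ^ 2)
      (nhdsWithin 0 (Set.Ioi 0)) (nhds 3) := by
  set G : ℝ → ℝ := fun s => 1 / (s + 4) ^ 2 / ∑' k : ℤ, 1 / (s + π ^ 2 * (2 * k + 1) ^ 2) ^ 2
  have hsum := hasSum_int_one_div_pi_sq_mul_odd_sq_sq
  have hG : ContinuousWithinAt G (Set.Ici 0) 0 := by
    refine ContinuousWithinAt.div (by fun_prop (disch := norm_num)) ?_
      (by simp only [zero_add, hsum.tsum_eq]; norm_num)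
    refine continuousOn_tsum_one_div_add_sq (fun k => ?_) hsum.summable 0 Set.self_mem_Ici
    have := two_mul_intCast_add_one_ne_zero k
    positivity
  have hG0 : G 0 = 3 := by
    simp only [G, zero_add, hsum.tsum_eq]
    norm_num
  have hs : Tendsto (fun Δ : ℝ => α ^ 2 * Δ ^ 2) (𝓝[>] 0) (𝓝[≥] 0) := by
    refine tendsto_nhdsWithin_of_tendsto_nhds_of_eventually_within _ ?_
      (Eventually.of_forall fun Δ => Set.mem_Ici.2 (by positivity))
    exact ((continuous_const.mul (continuous_pow 2)).tendsto' 0 0 (by simp)).mono_left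
      nhdsWithin_le_nhds
  rw [← hG0]
  refine (hG.tendsto.comp hs).congr' ?_
  filter_upwards [self_mem_nhdsWithin] with Δ (hΔ : 0 < Δ)
  rw [Function.comp_apply, spde_nyquist_eq hα.ne' hΔ.ne',
    tsum_congr (aliased_matern_nyquist_term_eq hΔ.ne'), tsum_mul_left,
    mul_div_mul_left _ _ (by positivity)]
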